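/- arXiv:1205.4172 — 4 statements merged into one kernel-verified Lean document; each statement's English description precedes it below -/
import Mathlib

section
/- For every integer n ≥ 1 and every real A with 0 < A ≤ n, V(n) ≤ G(π) + (π²/4)·n²·G(A/n) + π²·∫_{A/n}^{π} G(y)/y³ dy. -/
open MeasureTheory Filter Set Topology

/-- Fejér-type kernel: `I_n(y) = sin²(ny/2)/sin²(y/2)` for `y ≠ 0`, `I_n(0) = n²`. -/
noncomputable def fejerKernel (n : ℕ) (y : ℝ) : ℝ :=
  if y = 0 then (n : ℝ) ^ 2 else Real.sin (n * y / 2) ^ 2 / Real.sin (y / 2) ^ 2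

/-- Variance functional `V(n) = ∫_{[0,π]} I_n(y) dμ(y)`. -/
noncomputable def varV (μ : Measure ℝ) (n : ℕ) : ℝ :=
  ∫ y in Icc 0 Real.pi, fejerKernel n y ∂μ

/-- `G(x) = μ([0,x])` for a measure `μ` on `[0,π]`. -/
noncomputable def specG (μ : Measure ℝ) (x : ℝ) : ℝ :=
  (μ (Icc 0 x)).toReal

/-- A function `L : (0,∞) → (0,∞)` is slowly varying at infinity if
`L(λx)/L(x) → 1` as `x → ∞` for every `λ > 0`. -/
def SlowlyVarying (L : ℝ → ℝ) : Prop :=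
  ∀ lam : ℝ, 0 < lam → Tendsto (fun x => L (lam * x) / L x) atTop (𝓝 1)

/-!
Since `sin² (y/2) ≥ 2y² / (y² + π²)` on `(0, π]`, the kernel satisfies
`I_n(y) ≤ 1/2 + π²/(2y²) = 1 + π² ∫_y^π t⁻³ dt` there, while `I_n ≤ n²` everywhere.
So with `a = A/n` the kernel is dominated on `[0, π]` by
`1 + (π²n²/4) 1_{[0,a]}(y) + π² ∫_{max(a,y)}^π t⁻³ dt`, and integrating this against `μ`,
Fubini turns the last term into `π² ∫_a^π G(t)/t³ dt`.
-/
open Real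

lemma abs_sin_nat_mul_le (n : ℕ) (x : ℝ) : |sin (n * x)| ≤ n * |sin x| := by
  induction n with
  | zero => simp
  | succ k ih =>
    calc |sin ((k + 1 : ℕ) * x)| = |sin (k * x) * cos x + cos (k * x) * sin x| := by
          push_cast; rw [add_mul, one_mul, sin_add]
      _ ≤ |sin (k * x)| * |cos x| + |cos (k * x)| * |sin x| := by
          simpa only [abs_mul] using abs_add_le (sin (k * x) * cos x) (cos (k * x) * sin x)
      _ ≤ k * |sin x| * 1 + 1 * |sin x| := by
          gcongr
          exacts [abs_cos_le_one x, abs_cos_le_one _]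
      _ = (k + 1 : ℕ) * |sin x| := by push_cast; ring

lemma fejerKernel_nonneg (n : ℕ) (y : ℝ) : 0 ≤ fejerKernel n y := by
  unfold fejerKernel; split_ifs <;> positivity

lemma fejerKernel_le_sq (n : ℕ) (y : ℝ) : fejerKernel n y ≤ n ^ 2 := by
  unfold fejerKernel
  split_ifs
  · rfl
  · refine div_le_of_le_mul₀ (by positivity) (by positivity) ?_
    rw [mul_div_assoc, ← sq_abs, ← sq_abs (sin (y / 2)), ← mul_pow]
    exact pow_le_pow_left₀ (abs_nonneg _) (abs_sin_nat_mul_le n _) 2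

lemma eight_mul_sq_le_sin_sq_mul {t : ℝ} (ht : 0 < t) (ht' : t ≤ π / 2) :
    8 * t ^ 2 ≤ sin t ^ 2 * (4 * t ^ 2 + π ^ 2) := by
  have hπ : 3.1415 < π := by linarith [pi_gt_d6]
  have hπ' : π < 3.1416 := by linarith [pi_lt_d6]
  rcases le_or_gt t 1 with h1 | h1
  · have ht2 : t ^ 2 ≤ 1 := by nlinarith
    have hsin := sin_gt_sub_cube ht
    have hpos : 0 < t - t ^ 3 / 6 := by nlinarith
    have hsq : (t - t ^ 3 / 6) ^ 2 ≤ sin t ^ 2 := pow_le_pow_left₀ hpos.le hsin.le 2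
    have hpoly : 8 ≤ (1 - t ^ 2 / 6) ^ 2 * (4 * t ^ 2 + π ^ 2) := by
      have hπ2 : π ^ 2 < 9.87 := by nlinarith
      have hsq' : 1 - t ^ 2 / 3 ≤ (1 - t ^ 2 / 6) ^ 2 := by nlinarith [sq_nonneg (t ^ 2)]
      nlinarith [mul_le_mul_of_nonneg_right hsq' (by positivity : (0 : ℝ) ≤ 4 * t ^ 2 + π ^ 2),
        mul_nonneg (sq_nonneg t) (sub_nonneg.2 ht2), mul_nonneg (sq_nonneg t) (sub_nonneg.2 hπ2.le)]
    calc 8 * t ^ 2 ≤ (1 - t ^ 2 / 6) ^ 2 * (4 * t ^ 2 + π ^ 2) * t ^ 2 := by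
          nlinarith [sq_nonneg t]
      _ = (t - t ^ 3 / 6) ^ 2 * (4 * t ^ 2 + π ^ 2) := by ring
      _ ≤ sin t ^ 2 * (4 * t ^ 2 + π ^ 2) := by gcongr
  · set s := π / 2 - t with hs
    have hs0 : 0 ≤ s := by linarith
    have hs1 : s ≤ 0.58 := by linarith
    have hcos : 1 - s ^ 2 / 2 ≤ sin t := by
      rw [← cos_pi_div_two_sub]; exact one_sub_sq_div_two_le_cos
    have hsq : 1 - s ^ 2 ≤ sin t ^ 2 := by
      nlinarith [pow_le_pow_left₀ (by nlinarith) hcos 2, sq_nonneg (s ^ 2)]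
    have hpoly : s * (4 * t ^ 2 + π ^ 2) ≤ 2 * (π + 2 * t) := by
      nlinarith [mul_nonneg (sub_nonneg.2 h1.le) hs0,
        mul_nonneg (mul_nonneg (sub_nonneg.2 h1.le) hs0) hs0,
        mul_nonneg (mul_nonneg hs0 hs0) hs0, sq_nonneg (t - 1)]
    calc 8 * t ^ 2 ≤ (1 - s ^ 2) * (4 * t ^ 2 + π ^ 2) := by
          nlinarith [mul_nonneg hs0 (sub_nonneg.2 hpoly)]
      _ ≤ sin t ^ 2 * (4 * t ^ 2 + π ^ 2) := by gcongr

lemma fejerKernel_le_of_pos (n : ℕ) {x : ℝ} (hx : 0 < x) (hxπ : x ≤ π) :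
    fejerKernel n x ≤ 1 / 2 + π ^ 2 / (2 * x ^ 2) := by
  have hsin : 0 < sin (x / 2) := sin_pos_of_pos_of_lt_pi (by linarith) (by linarith [pi_pos])
  have hkey := eight_mul_sq_le_sin_sq_mul (t := x / 2) (by linarith) (by linarith)
  rw [fejerKernel, if_neg hx.ne', div_le_iff₀ (by positivity)]
  calc sin (n * x / 2) ^ 2 ≤ 1 := sin_sq_le_one _
    _ ≤ (1 / 2 + π ^ 2 / (2 * x ^ 2)) * sin (x / 2) ^ 2 := by
      rw [div_add_div _ _ (by norm_num) (by positivity), div_mul_eq_mul_div,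
        le_div_iff₀ (by positivity)]
      nlinarith [hkey]

lemma integral_inv_pow_three {b c : ℝ} (hc : 0 < c) (hb : 0 < b) :
    ∫ y in c..b, (y ^ 3)⁻¹ = ((c ^ 2)⁻¹ - (b ^ 2)⁻¹) / 2 := by
  have hzero : (0 : ℝ) ∉ uIcc c b := fun h => by
    rcases mem_uIcc.1 h with h | h <;> linarith [h.1]
  have := integral_zpow (a := c) (b := b) (n := -3) (Or.inr ⟨by norm_num, hzero⟩)
  simp only [zpow_neg] at this
  norm_num at this
  rw [this]
  ring

lemma setIntegral_Ioc_inter_Ici (g : ℝ → ℝ) {a b x : ℝ} (h : max a x ≤ b) :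
    ∫ y in Ioc a b ∩ Ici x, g y = ∫ y in max a x..b, g y := by
  rw [intervalIntegral.integral_of_le h]
  rcases le_or_gt x a with hxa | hax
  · rw [max_eq_left hxa,
      inter_eq_self_of_subset_left (Ioc_subset_Ioi_self.trans (Ioi_subset_Ici hxa))]
  · have hset : Ioc a b ∩ Ici x = Icc x b := by
      ext y
      simp only [mem_inter_iff, mem_Ioc, mem_Ici, mem_Icc]
      constructor
      · rintro ⟨⟨_, hyb⟩, hxy⟩; exact ⟨hxy, hyb⟩
      · rintro ⟨hxy, hyb⟩; exact ⟨⟨hax.trans_le hxy, hyb⟩, hxy⟩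
    rw [max_eq_right hax.le, hset, integral_Icc_eq_integral_Ioc]

lemma integral_specG_mul_eq (μ : Measure ℝ) [IsFiniteMeasure μ] {g : ℝ → ℝ} {a b : ℝ}
    (hab : a ≤ b) (hg : IntegrableOn g (Ioc a b)) :
    ∫ y in a..b, specG μ y * g y = ∫ x in Icc 0 b, (∫ y in max a x..b, g y) ∂μ := by
  set F : ℝ → ℝ → ℝ := fun y x => (Icc 0 y).indicator (fun _ => g y) x
  have hF : Integrable (Function.uncurry F)
      ((volume.restrict (Ioc a b)).prod (μ.restrict (Icc 0 b))) := by
    have hS : MeasurableSet {p : ℝ × ℝ | 0 ≤ p.2 ∧ p.2 ≤ p.1} :=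
      (measurableSet_le measurable_const measurable_snd).inter
        (measurableSet_le measurable_snd measurable_fst)
    have hF_eq : Function.uncurry F = {p : ℝ × ℝ | 0 ≤ p.2 ∧ p.2 ≤ p.1}.indicator (g ·.1) := by
      ext p; simp only [F, Function.uncurry, indicator_apply, mem_Icc, mem_ofPred_eq]
    rw [hF_eq]
    exact (hg.comp_fst _).indicator hS
  calc ∫ y in a..b, specG μ y * g y = ∫ y in Ioc a b, ∫ x in Icc 0 b, F y x ∂μ := by
        rw [intervalIntegral.integral_of_le hab]
        refine setIntegral_congr_fun measurableSet_Ioc fun y hy => ?_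
        rw [setIntegral_indicator measurableSet_Icc,
          inter_eq_self_of_subset_right (Icc_subset_Icc_right hy.2), setIntegral_const,
          smul_eq_mul]
        rfl
    _ = ∫ x in Icc 0 b, (∫ y in Ioc a b, F y x) ∂μ := integral_integral_swap hF
    _ = ∫ x in Icc 0 b, (∫ y in max a x..b, g y) ∂μ := by
        refine setIntegral_congr_fun measurableSet_Icc fun x hx => ?_
        rw [← setIntegral_Ioc_inter_Ici g (max_le hab hx.2),
          ← setIntegral_indicator measurableSet_Ici]
        congr with y
        simp only [F, indicator_apply, mem_Icc, mem_Ici, hx.1, true_and]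

noncomputable def fejerMajorant (n : ℕ) (a x : ℝ) : ℝ :=
  1 + (Icc 0 a).indicator (fun _ => π ^ 2 / 4 * n ^ 2) x +
    π ^ 2 * (((max a x ^ 2)⁻¹ - (π ^ 2)⁻¹) / 2)

lemma fejerKernel_le_fejerMajorant (n : ℕ) {a x : ℝ} (ha : 0 < a) (hx : x ∈ Icc 0 π) :
    fejerKernel n x ≤ fejerMajorant n a x := by
  rcases le_or_gt x a with hxa | hax
  · have hn : fejerKernel n x ≤ π ^ 2 / 4 * n ^ 2 := by
      have h4 : 4 ≤ π ^ 2 := by nlinarith [pi_gt_three]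
      nlinarith [fejerKernel_le_sq n x, mul_le_mul_of_nonneg_right h4 (sq_nonneg (n : ℝ))]
    have htail : 0 ≤ 1 + π ^ 2 * (((max a x ^ 2)⁻¹ - (π ^ 2)⁻¹) / 2) := by
      have hπ : π ^ 2 * (π ^ 2)⁻¹ = 1 := mul_inv_cancel₀ (by positivity)
      have : 0 ≤ π ^ 2 * (max a x ^ 2)⁻¹ := by positivity
      nlinarith
    rw [fejerMajorant, indicator_of_mem (show x ∈ Icc 0 a from ⟨hx.1, hxa⟩)]
    linarith
  · rw [fejerMajorant, indicator_of_notMem fun h => hax.not_ge h.2, max_eq_right hax.le]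
    have hx0 : x ≠ 0 := (ha.trans hax).ne'
    calc fejerKernel n x ≤ 1 / 2 + π ^ 2 / (2 * x ^ 2) :=
          fejerKernel_le_of_pos n (ha.trans hax) hx.2
      _ = 1 + 0 + π ^ 2 * (((x ^ 2)⁻¹ - (π ^ 2)⁻¹) / 2) := by
          field_simp
          ring

lemma continuous_inv_max_sq {a : ℝ} (ha : 0 < a) : Continuous fun x => (max a x ^ 2)⁻¹ :=
  (continuous_const.max continuous_id).pow 2 |>.inv₀ fun _ =>
    pow_ne_zero 2 (lt_max_of_lt_left ha).ne'

lemma integrableOn_fejerMajorant (μ : Measure ℝ) [IsFiniteMeasure μ] (n : ℕ) {a : ℝ}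
    (ha : 0 < a) : IntegrableOn (fejerMajorant n a) (Icc 0 π) μ :=
  ((integrable_const 1).add ((integrable_const _).indicator measurableSet_Icc)).add
    ((((continuous_inv_max_sq ha).sub continuous_const).div_const 2).integrableOn_Icc.const_mul _)

lemma integral_fejerMajorant (μ : Measure ℝ) [IsFiniteMeasure μ] (n : ℕ) {a : ℝ} (ha : 0 < a)
    (haπ : a ≤ π) :
    ∫ x in Icc 0 π, fejerMajorant n a x ∂μ =
      specG μ π + π ^ 2 / 4 * n ^ 2 * specG μ a + π ^ 2 * ∫ y in a..π, specG μ y / y ^ 3 := by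
  have hcube : IntegrableOn (fun y : ℝ => (y ^ 3)⁻¹) (Ioc a π) :=
    ((continuousOn_id.pow 3).inv₀ fun y hy => pow_ne_zero 3 (ha.trans_le hy.1).ne')
      |>.integrableOn_Icc.mono_set Ioc_subset_Icc_self
  have htail : ∫ y in a..π, specG μ y / y ^ 3 =
      ∫ x in Icc 0 π, ((max a x ^ 2)⁻¹ - (π ^ 2)⁻¹) / 2 ∂μ := by
    simp_rw [div_eq_mul_inv (specG μ _)]
    rw [integral_specG_mul_eq μ haπ hcube]
    exact setIntegral_congr_fun measurableSet_Icc fun x _ =>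
      integral_inv_pow_three (lt_max_of_lt_left ha) pi_pos
  rw [htail, ← integral_const_mul]
  unfold fejerMajorant
  rw [integral_add, integral_add, setIntegral_const, setIntegral_indicator measurableSet_Icc,
    inter_eq_self_of_subset_right (Icc_subset_Icc_right haπ), setIntegral_const]
  · simp only [smul_eq_mul, mul_one, specG, measureReal_def]
    ring
  · exact integrable_const _
  · exact (integrable_const _).indicator measurableSet_Icc
  · exact ((integrable_const _).add ((integrable_const _).indicator measurableSet_Icc))
  · exact ((continuous_inv_max_sq ha).sub continuous_const |>.div_const 2).integrableOn_Icc.const_mul _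

theorem variance_upper_bound_general (μ : Measure ℝ) [IsFiniteMeasure μ]
    (n : ℕ) (hn : 1 ≤ n)
    (A : ℝ) (hA : 0 < A) (hAn : A ≤ (n : ℝ)) :
    varV μ n ≤ specG μ Real.pi + Real.pi ^ 2 / 4 * (n : ℝ) ^ 2 * specG μ (A / (n : ℝ)) +
      Real.pi ^ 2 * ∫ y in (A / (n : ℝ))..Real.pi, specG μ y / y ^ 3 := by
  have hn' : (0 : ℝ) < n := by exact_mod_cast hn
  have ha : 0 < A / n := div_pos hA hn'
  have haπ : A / n ≤ π := ((div_le_one hn').2 hAn).trans (by linarith [pi_gt_three])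
  rw [← integral_fejerMajorant μ n ha haπ]
  refine integral_mono_of_nonneg (ae_of_all _ (fejerKernel_nonneg n))
    (integrableOn_fejerMajorant μ n ha) ?_
  filter_upwards [ae_restrict_mem measurableSet_Icc] with x hx
  exact fejerKernel_le_fejerMajorant n ha hx

/-- Upper bound: for `0 < A ≤ n`,
`V(n) ≤ G(π) + (π²/4) n² G(A/n) + π² ∫_{A/n}^{π} G(y)/y³ dy`. -/
theorem variance_upper_bound (μ : Measure ℝ) [IsFiniteMeasure μ]
    (hsupp : μ (Icc 0 Real.pi)ᶜ = 0) (n : ℕ) (hn : 1 ≤ n)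
    (A : ℝ) (hA : 0 < A) (hAn : A ≤ (n : ℝ)) :
    varV μ n ≤ specG μ Real.pi + Real.pi ^ 2 / 4 * (n : ℝ) ^ 2 * specG μ (A / (n : ℝ)) +
      Real.pi ^ 2 * ∫ y in (A / (n : ℝ))..Real.pi, specG μ y / y ^ 3 :=
  variance_upper_bound_general μ n hn A hA hAn
end

section
/- Let μ be the measure on [0,π] with density y ↦ 2y with respect to Lebesgue measure, so that G(x) = x² for x ∈ [0,π]. Then V(n) = 4·ln(n) + O(1); that is, there exists a constant C such that |V(n) − 4·ln(n)| ≤ C for all integers n ≥ 1. In particular, sup_n V(n) = ∞ while G(x)/x^{2} is bounded. -/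
open MeasureTheory Filter Set Topology

/-! On `(0, π]` one has `I_n(y) · 2y = 8 sin²(ny/2) / y + O(1)` uniformly in `n`, because
`1 / sin² x - 1 / x²` is bounded on `(0, π/2]`. The substitution `t = ny` turns the main term into
`8 ∫₀^{nπ} sin²(t/2) / t dt`. On `[1, nπ]` write `sin²(t/2) / t = (1/t - cos t / t) / 2`: the
`1/t` part gives `log (nπ) / 2`, and integration by parts bounds `∫ cos t / t` by a constant. -/

open Real intervalIntegral
open scoped Interval

theorem abs_integral_cos_div_le {a b : ℝ} (ha : 0 < a) (hab : a ≤ b) :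
    |∫ t in a..b, cos t / t| ≤ 2 / a := by
  have hpos : ∀ t ∈ uIcc a b, 0 < t := fun t ht => ha.trans_le (uIcc_of_le hab ▸ ht).1
  have hinv : ∀ t ∈ uIcc a b, HasDerivAt (fun t : ℝ => t⁻¹) (-(t ^ 2)⁻¹) t :=
    fun t ht => hasDerivAt_inv (hpos t ht).ne'
  have hcont : ContinuousOn (fun t : ℝ => (t ^ 2)⁻¹) (uIcc a b) :=
    (continuousOn_pow 2).inv₀ fun t ht => (pow_pos (hpos t ht) 2).ne'
  have hparts := integral_mul_deriv_eq_deriv_mul hinv (fun t _ => hasDerivAt_sin t)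
    hcont.neg.intervalIntegrable (continuous_cos.intervalIntegrable a b)
  have hrem : |∫ t in a..b, -(t ^ 2)⁻¹ * sin t| ≤ a⁻¹ - b⁻¹ := calc
    _ ≤ ∫ t in a..b, (t ^ 2)⁻¹ := by
      refine (abs_integral_le_integral_abs hab).trans
        (integral_mono_on hab ?_ hcont.intervalIntegrable fun t _ => ?_)
      · exact (hcont.neg.mul continuous_sin.continuousOn).intervalIntegrable.abs
      · rw [abs_mul, abs_neg, abs_of_nonneg (by positivity)]
        exact mul_le_of_le_one_right (by positivity) (abs_sin_le_one t)
    _ = a⁻¹ - b⁻¹ := by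
      rw [integral_eq_sub_of_hasDerivAt (f := fun t => -t⁻¹)
        (fun t ht => by simpa using (hinv t ht).fun_neg) hcont.intervalIntegrable]
      ring
  have hb_term : |b⁻¹ * sin b| ≤ b⁻¹ := by
    have hb0 : 0 < b⁻¹ := inv_pos.2 (ha.trans_le hab)
    rw [abs_mul, abs_of_pos hb0]
    exact mul_le_of_le_one_right hb0.le (abs_sin_le_one b)
  have ha_term : |a⁻¹ * sin a| ≤ a⁻¹ := by
    rw [abs_mul, abs_of_pos (inv_pos.2 ha)]
    exact mul_le_of_le_one_right (by positivity) (abs_sin_le_one a)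
  simp only [div_eq_inv_mul] at hparts ⊢
  rw [hparts]
  calc _ ≤ |b⁻¹ * sin b| + |a⁻¹ * sin a| + |∫ t in a..b, -(t ^ 2)⁻¹ * sin t| :=
        (abs_sub _ _).trans (add_le_add_left (abs_sub _ _) _)
    _ ≤ _ := by linarith

theorem abs_sin_mul_half_sq_div_le (c t : ℝ) : |sin (c * t / 2) ^ 2 / t| ≤ |c| / 2 := by
  rcases eq_or_ne t 0 with rfl | ht
  · simp only [div_zero, abs_zero]; positivity
  rw [abs_div, abs_of_nonneg (sq_nonneg _), div_le_iff₀ (abs_pos.2 ht), ← sq_abs]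
  calc |sin (c * t / 2)| ^ 2 ≤ |sin (c * t / 2)| := by
        nlinarith [abs_sin_le_one (c * t / 2), abs_nonneg (sin (c * t / 2))]
    _ ≤ |c * t / 2| := abs_sin_le_abs
    _ = |c| / 2 * |t| := by rw [abs_div, abs_mul, abs_two]; ring

theorem intervalIntegrable_sin_mul_half_sq_div (c a b : ℝ) :
    IntervalIntegrable (fun t => sin (c * t / 2) ^ 2 / t) volume a b :=
  (intervalIntegrable_const (c := |c| / 2)).mono_fun'
    (by fun_prop : Measurable fun t : ℝ => sin (c * t / 2) ^ 2 / t).aestronglyMeasurable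
    (ae_of_all _ fun t => (Real.norm_eq_abs _).trans_le (abs_sin_mul_half_sq_div_le c t))

theorem abs_integral_sin_half_sq_div_sub_log_le {X : ℝ} (hX : 1 ≤ X) :
    |(∫ t in 0..X, sin (t / 2) ^ 2 / t) - log X / 2| ≤ 3 / 2 := by
  have hhead : |∫ t in 0..1, sin (t / 2) ^ 2 / t| ≤ 1 / 2 := by
    simpa using norm_integral_le_of_norm_le_const (a := 0) (b := 1)
      fun t _ => (Real.norm_eq_abs _).trans_le (abs_sin_mul_half_sq_div_le 1 t)
  have hne : ∀ t ∈ uIcc 1 X, t ≠ 0 := fun t ht =>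
    (zero_lt_one.trans_le (uIcc_of_le hX ▸ ht).1).ne'
  have htail : ∫ t in 1..X, sin (t / 2) ^ 2 / t = log X / 2 - (∫ t in 1..X, cos t / t) / 2 := by
    have hhalf : ∀ t : ℝ, sin (t / 2) ^ 2 / t = t⁻¹ / 2 - cos t / t / 2 := fun t => by
      rw [sin_sq_eq_half_sub, mul_div_cancel₀ t two_ne_zero]; ring
    have hinv_int : IntervalIntegrable (fun t : ℝ => t⁻¹ / 2) volume 1 X :=
      (intervalIntegrable_inv hne continuousOn_id).div_const 2
    have hcos_int : IntervalIntegrable (fun t : ℝ => cos t / t / 2) volume 1 X :=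
      (continuousOn_cos.div continuousOn_id hne).intervalIntegrable.div_const 2
    simp_rw [hhalf]
    rw [integral_sub hinv_int hcos_int, intervalIntegral.integral_div,
      intervalIntegral.integral_div, integral_inv_of_pos one_pos (by linarith), div_one]
  have hcos := abs_integral_cos_div_le one_pos hX
  have hint (a b : ℝ) : IntervalIntegrable (fun t => sin (t / 2) ^ 2 / t) volume a b := by
    simpa using intervalIntegrable_sin_mul_half_sq_div 1 a b
  rw [← integral_add_adjacent_intervals (hint 0 1) (hint 1 X), htail]
  rw [abs_le] at hhead hcos ⊢
  constructor <;> linarith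

theorem integral_sin_mul_half_sq_div (c b : ℝ) :
    ∫ y in 0..b, sin (c * y / 2) ^ 2 / y = ∫ t in 0..c * b, sin (t / 2) ^ 2 / t := by
  have hsubst :=
    mul_integral_comp_mul_left (f := fun t => sin (t / 2) ^ 2 / t) (a := 0) (b := b) c
  rw [mul_zero] at hsubst
  rw [← hsubst, ← intervalIntegral.integral_const_mul]
  congr 1 with y
  rcases eq_or_ne c 0 with rfl | hc
  · simp
  · field_simp

theorem inv_sin_sq_sub_inv_sq_mem_Icc {x : ℝ} (hx0 : 0 < x) (hx : x ≤ π / 2) :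
    (sin x ^ 2)⁻¹ - (x ^ 2)⁻¹ ∈ Icc 0 (π ^ 2 / 12) := by
  have hs : 0 < sin x := sin_pos_of_pos_of_lt_pi hx0 (by linarith [pi_pos])
  have hle : sin x ≤ x := sin_le hx0.le
  have hcube : x - x ^ 3 / 6 ≤ sin x := sin_ge_sub_cube hx0.le
  have hjordan : 2 * x ≤ π * sin x := by
    have := mul_le_sin hx0.le hx
    rw [div_mul_eq_mul_div, div_le_iff₀ pi_pos] at this
    linarith
  constructor
  · exact sub_nonneg.2 (inv_anti₀ (by positivity) (pow_le_pow_left₀ hs.le hle 2))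
  · rw [inv_sub_inv (by positivity) (by positivity),
      div_le_div_iff₀ (by positivity) (by positivity)]
    have hnum : x ^ 2 - sin x ^ 2 ≤ x ^ 4 / 3 := by nlinarith
    have hden : 4 * x ^ 4 ≤ π ^ 2 * (sin x ^ 2 * x ^ 2) := by
      nlinarith [mul_self_le_mul_self (by positivity) hjordan]
    nlinarith

@[fun_prop]
theorem measurable_fejerKernel (n : ℕ) : Measurable (fejerKernel n) :=
  Measurable.ite (measurableSet_singleton 0) measurable_const (by fun_prop)

theorem fejerKernel_mul_sub_eq (n : ℕ) {y : ℝ} (hy : y ≠ 0) :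
    fejerKernel n y * (2 * y) - 8 * (sin (n * y / 2) ^ 2 / y) =
      2 * y * sin (n * y / 2) ^ 2 * ((sin (y / 2) ^ 2)⁻¹ - ((y / 2) ^ 2)⁻¹) := by
  rw [fejerKernel, if_neg hy]
  field_simp
  ring

theorem abs_fejerKernel_mul_sub_le (n : ℕ) {y : ℝ} (hy0 : 0 < y) (hyπ : y ≤ π) :
    |fejerKernel n y * (2 * y) - 8 * (sin (n * y / 2) ^ 2 / y)| ≤ π ^ 3 / 6 := by
  obtain ⟨hlo, hhi⟩ := inv_sin_sq_sub_inv_sq_mem_Icc (half_pos hy0) (by linarith)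
  rw [fejerKernel_mul_sub_eq n hy0.ne', abs_of_nonneg (by positivity)]
  calc _ ≤ 2 * π * 1 * (π ^ 2 / 12) := by gcongr; exact sin_sq_le_one _
    _ = π ^ 3 / 6 := by ring

theorem varV_withDensity {f : ℝ → ℝ} (hf : Measurable f) (hf0 : ∀ y ∈ Icc 0 π, 0 ≤ f y)
    (n : ℕ) :
    varV ((volume.restrict (Icc 0 π)).withDensity fun y => ENNReal.ofReal (f y)) n =
      ∫ y in 0..π, fejerKernel n y * f y := by
  rw [varV, restrict_withDensity measurableSet_Icc, Measure.restrict_restrict measurableSet_Icc,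
    inter_self, integral_withDensity_eq_integral_toReal_smul hf.ennreal_ofReal
      (ae_of_all _ fun _ => ENNReal.ofReal_lt_top),
    integral_Icc_eq_integral_Ioc, integral_of_le pi_pos.le]
  refine setIntegral_congr_fun measurableSet_Ioc fun y hy => ?_
  rw [ENNReal.toReal_ofReal (hf0 y (Ioc_subset_Icc_self hy)), smul_eq_mul, mul_comm]

theorem specG_withDensity {f : ℝ → ℝ} (hf : IntegrableOn f (Icc 0 π))
    (hf0 : ∀ y ∈ Icc 0 π, 0 ≤ f y) {x : ℝ} (hx : 0 ≤ x) :
    specG ((volume.restrict (Icc 0 π)).withDensity fun y => ENNReal.ofReal (f y)) x =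
      ∫ y in 0..min x π, f y := by
  have hsub : Icc 0 (min x π) ⊆ Icc 0 π := Icc_subset_Icc_right (min_le_right x π)
  rw [specG, withDensity_apply _ measurableSet_Icc, Measure.restrict_restrict measurableSet_Icc,
    Icc_inter_Icc, max_self, ← ofReal_integral_eq_lintegral_ofReal (hf.mono_set hsub)
      ((ae_restrict_iff' measurableSet_Icc).2 (ae_of_all _ fun y hy => hf0 y (hsub hy))),
    ENNReal.toReal_ofReal (setIntegral_nonneg measurableSet_Icc fun y hy => hf0 y (hsub hy)),
    integral_Icc_eq_integral_Ioc, integral_of_le (le_min hx pi_pos.le)]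

noncomputable def twoMulDensityMeasure : Measure ℝ :=
  (volume.restrict (Icc 0 π)).withDensity fun y => ENNReal.ofReal (2 * y)

theorem specG_twoMulDensityMeasure {x : ℝ} (hx : 0 ≤ x) :
    specG twoMulDensityMeasure x = min x π ^ 2 := by
  rw [twoMulDensityMeasure, specG_withDensity (by fun_prop : Continuous _).integrableOn_Icc
      (fun y hy => by linarith [hy.1]) hx, intervalIntegral.integral_const_mul, integral_id]
  ring

theorem abs_varV_twoMulDensityMeasure_sub_log_le {n : ℕ} (hn : 1 ≤ n) :
    |varV twoMulDensityMeasure n - 4 * log n| ≤ π ^ 4 / 6 + 4 * log π + 12 := by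
  set D : ℝ → ℝ := fun y => fejerKernel n y * (2 * y) - 8 * (sin (n * y / 2) ^ 2 / y)
  have hDbound : ∀ y ∈ Ι 0 π, ‖D y‖ ≤ π ^ 3 / 6 := fun y hy => by
    rw [uIoc_of_le pi_pos.le] at hy
    exact (Real.norm_eq_abs _).trans_le (abs_fejerKernel_mul_sub_le n hy.1 hy.2)
  have hDint : IntervalIntegrable D volume 0 π :=
    (intervalIntegrable_const (c := π ^ 3 / 6)).mono_fun'
      (by fun_prop : Measurable D).aestronglyMeasurable
      ((ae_restrict_iff' measurableSet_uIoc).2 (ae_of_all _ hDbound))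
  have hsplit : ∫ y in 0..π, fejerKernel n y * (2 * y) =
      (∫ y in 0..π, D y) + 8 * ∫ y in 0..π, sin (n * y / 2) ^ 2 / y := by
    rw [← intervalIntegral.integral_const_mul, ← integral_add hDint]
    · simp [D]
    · exact (intervalIntegrable_sin_mul_half_sq_div n 0 π).const_mul 8
  have hD : |∫ y in 0..π, D y| ≤ π ^ 4 / 6 := by
    have := norm_integral_le_of_norm_le_const hDbound
    rw [Real.norm_eq_abs, sub_zero, abs_of_pos pi_pos] at this
    linarith
  have hn1 : (1 : ℝ) ≤ n := by exact_mod_cast hn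
  have hlog := abs_integral_sin_half_sq_div_sub_log_le (X := n * π) (by nlinarith [pi_gt_three])
  rw [← integral_sin_mul_half_sq_div, log_mul (by positivity) pi_pos.ne'] at hlog
  rw [twoMulDensityMeasure, varV_withDensity (by fun_prop) (fun y hy => by linarith [hy.1]),
    hsplit]
  have hlogπ : 0 ≤ log π := log_nonneg (by linarith [pi_gt_three])
  rw [abs_le] at hD hlog ⊢
  constructor <;> linarith

theorem tendsto_varV_twoMulDensityMeasure_atTop :
    Tendsto (varV twoMulDensityMeasure) atTop atTop := by
  have hlog : Tendsto (fun n : ℕ => 4 * log n + -(π ^ 4 / 6 + 4 * log π + 12)) atTop atTop :=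
    tendsto_atTop_add_const_right _ _
      ((tendsto_log_atTop.comp tendsto_natCast_atTop_atTop).const_mul_atTop four_pos)
  refine tendsto_atTop_mono' _ ((eventually_ge_atTop 1).mono fun n hn => ?_) hlog
  linarith [(abs_le.1 (abs_varV_twoMulDensityMeasure_sub_log_le hn)).1]

/-- For the measure with density `2y` on `[0,π]` (so `G(x) = x²`), one has
`V(n) = 4 ln n + O(1)`; in particular `sup_n V(n) = ∞` while `G(x)/x²` is bounded. -/
theorem variance_log_growth_example (μ : Measure ℝ)
    (hμ : μ = (volume.restrict (Icc 0 Real.pi)).withDensity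
      (fun y => ENNReal.ofReal (2 * y))) :
    (∀ x ∈ Icc (0 : ℝ) Real.pi, specG μ x = x ^ 2) ∧
    (∃ C : ℝ, ∀ n : ℕ, 1 ≤ n → |varV μ n - 4 * Real.log n| ≤ C) ∧
    (¬ ∃ M : ℝ, ∀ n : ℕ, varV μ n ≤ M) ∧
    (∃ M : ℝ, ∀ x : ℝ, 0 < x → specG μ x / x ^ 2 ≤ M) := by
  obtain rfl : μ = twoMulDensityMeasure := hμ
  refine ⟨fun x hx => ?_, ⟨_, fun n => abs_varV_twoMulDensityMeasure_sub_log_le⟩,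
    fun ⟨M, hM⟩ => ?_, ⟨1, fun x hx => ?_⟩⟩
  · rw [specG_twoMulDensityMeasure hx.1, min_eq_left hx.2]
  · obtain ⟨n, hn⟩ := (tendsto_varV_twoMulDensityMeasure_atTop.eventually_gt_atTop M).exists
    exact (hM n).not_gt hn
  · rw [specG_twoMulDensityMeasure hx.le, div_le_one (by positivity)]
    exact pow_le_pow_left₀ (le_min hx.le pi_pos.le) (min_le_left x π) 2
end

section
/- There exists a finite Borel measure μ on [0,π] (the spectral measure of a weakly stationary process) such that the sequence V(2^r)/2^r converges to a finite positive limit as r → ∞, but the full sequence V(n)/n does not converge as n → ∞. -/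
/-!
Take `x = π/3` and `μ = ∑ₖ 2ᵏ sin²(x/2ᵏ) δ_{2x/2ᵏ}`. Since `sin² t · I_n(2t) = sin²(nt)`,
the variance is `V(n) = F(nx)` with `F(x) = ∑ₖ 2ᵏ sin²(x/2ᵏ)`, and `F(2x) = 2F(x) + sin²(2x)`.
As `sin²(2ʲπ/3) = 3/4` for every `j`, this gives `V(2ʳ)/2ʳ → F(π/3) + 3/4 ≈ 2.54`, while
`sin(2ʲπ) = 0` makes `V(3·2ʳ)/(3·2ʳ) = F(π)/3 ≈ 2.13` for every `r`.
-/

open MeasureTheory Filter Set Topology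

open Real

lemma sin_sq_mul_fejerKernel (n : ℕ) (t : ℝ) :
    sin t ^ 2 * fejerKernel n (2 * t) = sin (n * t) ^ 2 := by
  rcases eq_or_ne (sin t) 0 with ht | ht
  · obtain ⟨m, rfl⟩ := sin_eq_zero_iff.1 ht
    have hnm : sin (n * (m * π)) = 0 := by
      simpa [mul_assoc] using sin_int_mul_pi (n * m)
    simp [ht, hnm]
  · have h2t : 2 * t ≠ 0 := by rintro h; simp_all
    rw [fejerKernel, if_neg h2t, mul_div_cancel_left₀ t two_ne_zero,
      show (n : ℝ) * (2 * t) / 2 = n * t by ring, mul_div_cancel₀ _ (pow_ne_zero 2 ht)]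

lemma varV_eq_integral {μ : Measure ℝ} (hμ : μ (Icc 0 π)ᶜ = 0) (n : ℕ) :
    varV μ n = ∫ y, fejerKernel n y ∂μ := by
  have hae : ∀ᵐ y ∂μ, y ∈ Icc 0 π := mem_ae_iff.2 hμ
  rw [varV, Measure.restrict_eq_self_of_ae_mem hae]

lemma two_pow_mul_sin_sq_div_two_pow_le (x : ℝ) (k : ℕ) :
    2 ^ k * sin (x / 2 ^ k) ^ 2 ≤ x ^ 2 * (1 / 2) ^ k :=
  calc 2 ^ k * sin (x / 2 ^ k) ^ 2 ≤ 2 ^ k * (x / 2 ^ k) ^ 2 :=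
        mul_le_mul_of_nonneg_left sin_sq_le_sq (by positivity)
    _ = x ^ 2 * (1 / 2) ^ k := by rw [one_div_pow]; field_simp

lemma summable_dyadicSinSq (x : ℝ) : Summable fun k : ℕ => 2 ^ k * sin (x / 2 ^ k) ^ 2 :=
  .of_nonneg_of_le (fun _ => by positivity) (two_pow_mul_sin_sq_div_two_pow_le x)
    (summable_geometric_two.mul_left _)

noncomputable def dyadicSinSq (x : ℝ) : ℝ := ∑' k : ℕ, 2 ^ k * sin (x / 2 ^ k) ^ 2

lemma dyadicSinSq_nonneg (x : ℝ) : 0 ≤ dyadicSinSq x :=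
  tsum_nonneg fun _ => by positivity

lemma sin_sq_le_dyadicSinSq (x : ℝ) : sin x ^ 2 ≤ dyadicSinSq x := by
  rw [dyadicSinSq]
  simpa using (summable_dyadicSinSq x).le_tsum 0 fun _ _ => by positivity

lemma dyadicSinSq_le (x : ℝ) : dyadicSinSq x ≤ 2 * x ^ 2 := by
  calc dyadicSinSq x ≤ ∑' k : ℕ, x ^ 2 * (1 / 2) ^ k :=
        (summable_dyadicSinSq x).tsum_le_tsum (two_pow_mul_sin_sq_div_two_pow_le x)
          (summable_geometric_two.mul_left _)
    _ = 2 * x ^ 2 := by rw [tsum_mul_left, tsum_geometric_two, mul_comm]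

lemma dyadicSinSq_two_mul (x : ℝ) :
    dyadicSinSq (2 * x) = 2 * dyadicSinSq x + sin (2 * x) ^ 2 := by
  rw [dyadicSinSq, (summable_dyadicSinSq _).tsum_eq_zero_add, dyadicSinSq, ← tsum_mul_left,
    add_comm]
  congr 1
  · congr with k
    rw [pow_succ', mul_div_mul_left _ _ two_ne_zero, mul_assoc]
  · simp

lemma dyadicSinSq_two_pow_mul (x : ℝ) (r : ℕ) :
    dyadicSinSq (2 ^ r * x) / 2 ^ r =
      dyadicSinSq x + ∑ j ∈ Finset.range r, sin (2 ^ (j + 1) * x) ^ 2 / 2 ^ (j + 1) := by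
  induction r with
  | zero => simp
  | succ r ih =>
    rw [Finset.sum_range_succ, ← add_assoc, ← ih, pow_succ', mul_assoc, dyadicSinSq_two_mul,
      ← mul_assoc, ← pow_succ']
    field_simp
    ring

lemma sin_sq_two_pow_mul_pi_div_three (j : ℕ) : sin (2 ^ j * (π / 3)) ^ 2 = 3 / 4 := by
  induction j with
  | zero => norm_num [div_pow]
  | succ j ih =>
    rw [pow_succ' (2 : ℝ), mul_assoc, sin_two_mul, mul_pow, mul_pow, cos_sq', ih]
    norm_num

lemma tendsto_dyadicSinSq_two_pow_mul_pi_div_three :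
    Tendsto (fun r : ℕ => dyadicSinSq (2 ^ r * (π / 3)) / 2 ^ r) atTop
      (𝓝 (dyadicSinSq (π / 3) + 3 / 4)) := by
  simp_rw [dyadicSinSq_two_pow_mul, sin_sq_two_pow_mul_pi_div_three, pow_succ', ← div_div]
  exact tendsto_const_nhds.add (hasSum_geometric_two' _).tendsto_sum_nat

lemma dyadicSinSq_two_pow_mul_pi (r : ℕ) : dyadicSinSq (2 ^ r * π) = 2 ^ r * dyadicSinSq π := by
  have hsin (j : ℕ) : sin (2 ^ (j + 1) * π) = 0 := by exact_mod_cast sin_nat_mul_pi (2 ^ (j + 1))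
  have h := dyadicSinSq_two_pow_mul π r
  rw [Finset.sum_eq_zero fun j _ => by rw [hsin]; ring, add_zero, div_eq_iff (by positivity)] at h
  rw [h, mul_comm]

-- `F(π/3) = 4 F(π/12) + 5/4` and `F(π/12) ≥ sin²(π/12) = (2 - √3)/4`.
lemma three_halves_lt_dyadicSinSq_pi_div_three : 3 / 2 < dyadicSinSq (π / 3) := by
  have h3 : √3 < 7 / 4 := (sqrt_lt' (by norm_num)).2 (by norm_num)
  have h12 : sin (π / 12) ^ 2 = 1 / 2 - √3 / 4 := by
    rw [sin_sq_eq_half_sub, show 2 * (π / 12) = π / 6 by ring, cos_pi_div_six]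
    ring
  have h6 := dyadicSinSq_two_mul (π / 12)
  have h3' := dyadicSinSq_two_mul (π / 6)
  rw [show 2 * (π / 12) = π / 6 by ring, sin_pi_div_six] at h6
  rw [show 2 * (π / 6) = π / 3 by ring, sin_pi_div_three] at h3'
  have := sin_sq_le_dyadicSinSq (π / 12)
  nlinarith [sq_sqrt (show (0:ℝ) ≤ 3 by norm_num)]

-- `F(π) = 8 F(π/8) + 4` and `F(π/8) ≤ 2 (π/8)²`.
lemma dyadicSinSq_pi_lt : dyadicSinSq π < 27 / 4 := by
  have h1 := dyadicSinSq_two_mul (π / 2)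
  have h2 := dyadicSinSq_two_mul (π / 4)
  have h3 := dyadicSinSq_two_mul (π / 8)
  rw [mul_div_cancel₀ π two_ne_zero, sin_pi] at h1
  rw [show 2 * (π / 4) = π / 2 by ring, sin_pi_div_two] at h2
  rw [show 2 * (π / 8) = π / 4 by ring, sin_pi_div_four, div_pow,
    sq_sqrt (show (0:ℝ) ≤ 2 by norm_num)] at h3
  have := dyadicSinSq_le (π / 8)
  nlinarith [pi_lt_d2, pi_pos]

noncomputable def dyadicMeasure (x : ℝ) : Measure ℝ :=
  Measure.sum fun k : ℕ =>
    ENNReal.ofReal (2 ^ k * sin (x / 2 ^ k) ^ 2) • Measure.dirac (2 * x / 2 ^ k)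

instance (x : ℝ) : IsFiniteMeasure (dyadicMeasure x) := by
  constructor
  simp only [dyadicMeasure, Measure.sum_apply _ MeasurableSet.univ, Measure.smul_apply,
    measure_univ, smul_eq_mul, mul_one]
  rw [← ENNReal.ofReal_tsum_of_nonneg (fun _ => by positivity) (summable_dyadicSinSq x)]
  exact ENNReal.ofReal_lt_top

lemma dyadicMeasure_compl_Icc {x : ℝ} (hx₀ : 0 ≤ x) (hx : x ≤ π / 2) :
    dyadicMeasure x (Icc 0 π)ᶜ = 0 := by
  have hmem (k : ℕ) : 2 * x / 2 ^ k ∈ Icc 0 π :=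
    ⟨by positivity, (div_le_self (by positivity) (one_le_pow₀ one_le_two)).trans (by linarith)⟩
  simp [dyadicMeasure, Measure.sum_apply _ measurableSet_Icc.compl, hmem]

lemma varV_dyadicMeasure {x : ℝ} (hx₀ : 0 ≤ x) (hx : x ≤ π / 2) (n : ℕ) :
    varV (dyadicMeasure x) n = dyadicSinSq (n * x) := by
  rw [varV_eq_integral (dyadicMeasure_compl_Icc hx₀ hx), dyadicMeasure,
    integral_sum_dirac fun _ => ENNReal.ofReal_ne_top, dyadicSinSq]
  congr with k
  rw [ENNReal.toReal_ofReal (by positivity), smul_eq_mul, mul_assoc, mul_div_assoc,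
    sin_sq_mul_fejerKernel, mul_div_assoc]

lemma varV_dyadicMeasure_pi_div_three (n : ℕ) :
    varV (dyadicMeasure (π / 3)) n = dyadicSinSq (n * (π / 3)) :=
  varV_dyadicMeasure (by positivity) (by linarith [pi_pos]) n

lemma tendsto_varV_dyadicMeasure_two_pow_div :
    Tendsto (fun r : ℕ => varV (dyadicMeasure (π / 3)) (2 ^ r) / (2 ^ r : ℝ)) atTop
      (𝓝 (dyadicSinSq (π / 3) + 3 / 4)) := by
  simpa [varV_dyadicMeasure_pi_div_three] using tendsto_dyadicSinSq_two_pow_mul_pi_div_three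

lemma varV_dyadicMeasure_three_mul_two_pow_div (r : ℕ) :
    varV (dyadicMeasure (π / 3)) (3 * 2 ^ r) / ((3 * 2 ^ r : ℕ) : ℝ) = dyadicSinSq π / 3 := by
  rw [varV_dyadicMeasure_pi_div_three]
  push_cast
  rw [show 3 * 2 ^ r * (π / 3) = 2 ^ r * π by ring, dyadicSinSq_two_pow_mul_pi]
  field_simp

/-- There exists a finite Borel measure `μ` on `[0,π]` such that `V(2^r)/2^r`
converges to a finite positive limit, but `V(n)/n` does not converge. -/
theorem dyadic_convergence_not_sufficient :
    ∃ μ : Measure ℝ, IsFiniteMeasure μ ∧ μ (Icc 0 Real.pi)ᶜ = 0 ∧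
      (∃ c : ℝ, 0 < c ∧
        Tendsto (fun r : ℕ => varV μ (2 ^ r) / (2 ^ r : ℝ)) atTop (𝓝 c)) ∧
      ¬ ∃ c : ℝ, Tendsto (fun n : ℕ => varV μ n / (n : ℝ)) atTop (𝓝 c) := by
  refine ⟨dyadicMeasure (π / 3), inferInstance,
    dyadicMeasure_compl_Icc (by positivity) (by linarith [pi_pos]),
    ⟨_, by linarith [dyadicSinSq_nonneg (π / 3)], tendsto_varV_dyadicMeasure_two_pow_div⟩, ?_⟩
  rintro ⟨c, hc⟩
  have h2 : Tendsto (fun r : ℕ => 2 ^ r) atTop atTop := tendsto_pow_atTop_atTop_of_one_lt one_lt_two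
  have hc_dyadic : c = dyadicSinSq (π / 3) + 3 / 4 :=
    tendsto_nhds_unique (by simpa [Function.comp_def] using hc.comp h2)
      tendsto_varV_dyadicMeasure_two_pow_div
  have hc_triadic : c = dyadicSinSq π / 3 :=
    tendsto_nhds_unique (hc.comp (h2.const_mul_atTop' three_pos)) (by
      simp only [Function.comp_def, varV_dyadicMeasure_three_mul_two_pow_div, tendsto_const_nhds])
  linarith [three_halves_lt_dyadicSinSq_pi_div_three, dyadicSinSq_pi_lt]
end

section
/- Let γ ∈ (0,2), K₀ > 0, and let h : [0,∞) → [0,∞) be nondecreasing and right-continuous with h(0) = 0, satisfying h(y) ≤ C·y^{2−γ} for all y > 0 and some constant C, and suppose ∫_{(0,∞)} sin²(rx)/x² dh(x) = K₀·r^γ for every r > 0. Define ψ(y) := ∫_{(y,∞)} x^{−2} dh(x) for y > 0 (which is finite). Then for every r > 0, lim_{a→∞} ∫_0^a sin(ry)·ψ(y) dy = (r/2)^{γ−1}·K₀. -/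
/-!
Write `ψ(y) = ∫ 1_{y<x} x⁻² dh(x)` and exchange the order of integration. Fubini applies because
a dyadic decomposition of `(y, ∞)` and `h(x) ≤ C x^{2-γ}` give `ψ(y) ≤ D y^{-γ}`, so that
`y ψ(y)` is integrable at `0` when `γ < 2`. Since `∫_0^b sin(ry) dy = (2/r) sin²(rb/2)`, this yields
`∫_0^a sin(ry) ψ(y) dy = (2/r) ∫ sin²(r min(a,x)/2) / x² dh(x)
  = (2/r) (∫_{(0,a]} sin²(rx/2) / x² dh(x) + sin²(ra/2) ψ(a))`.
As `a → ∞` the first term tends to `(2/r) K₀ (r/2)^γ = (r/2)^{γ-1} K₀` and the second to `0`.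
-/

open MeasureTheory Filter Set Topology
open scoped ENNReal

section TailBound

variable {μ : Measure ℝ} {γ C y : ℝ}

lemma Ioi_subset_iUnion_Ico_two_pow_mul (hy : 0 < y) :
    Ioi y ⊆ ⋃ n : ℕ, Ico (2 ^ n * y) (2 ^ (n + 1) * y) := by
  intro x hx
  obtain ⟨n, hn, hn'⟩ := exists_nat_pow_near ((one_le_div hy).2 (le_of_lt hx)) one_lt_two
  exact mem_iUnion.2 ⟨n, (le_div_iff₀ hy).1 hn, (div_lt_iff₀ hy).1 hn'⟩

lemma inv_sq_mul_rpow_two_pow_succ_mul (n : ℕ) (hy : 0 < y) :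
    ((2 ^ n * y)⁻¹) ^ 2 * (C * (2 ^ (n + 1) * y) ^ (2 - γ)) =
      C * 2 ^ (2 - γ) * y ^ (-γ) * ((2 : ℝ) ^ (-γ)) ^ n := by
  have hx : (0 : ℝ) < 2 ^ n * y := by positivity
  have hsplit : (2 ^ (n + 1) * y) ^ (2 - γ) =
      2 ^ (2 - γ) * (2 ^ n * y) ^ 2 * (((2 : ℝ) ^ (-γ)) ^ n * y ^ (-γ)) := by
    rw [pow_succ, mul_comm _ (2 : ℝ), mul_assoc, Real.mul_rpow zero_le_two hx.le, sub_eq_add_neg,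
      Real.rpow_add hx, Real.rpow_two, Real.mul_rpow (by positivity) hy.le,
      Real.rpow_pow_comm zero_le_two]
    ring
  rw [hsplit]
  field_simp

theorem lintegral_Ioi_inv_sq_le (hγ : 0 < γ)
    (hμ : ∀ b, 0 < b → μ (Ioc 0 b) ≤ ENNReal.ofReal (C * b ^ (2 - γ))) (hy : 0 < y) :
    ∫⁻ x in Ioi y, ENNReal.ofReal (x⁻¹ ^ 2) ∂μ ≤
      ENNReal.ofReal (C * 2 ^ (2 - γ) / (1 - 2 ^ (-γ)) * y ^ (-γ)) := by
  set q : ℝ := 2 ^ (-γ)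
  have hq0 : 0 ≤ q := by positivity
  have hq1 : q < 1 := Real.rpow_lt_one_of_one_lt_of_neg one_lt_two (neg_neg_of_pos hγ)
  set c : ℝ := C * 2 ^ (2 - γ) * y ^ (-γ)
  have dyadic_piece (n : ℕ) : ∫⁻ x in Ico (2 ^ n * y) (2 ^ (n + 1) * y),
      ENNReal.ofReal (x⁻¹ ^ 2) ∂μ ≤ ENNReal.ofReal (c * q ^ n) := by
    have hlo : (0 : ℝ) < 2 ^ n * y := by positivity
    calc ∫⁻ x in Ico (2 ^ n * y) (2 ^ (n + 1) * y), ENNReal.ofReal (x⁻¹ ^ 2) ∂μ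
        ≤ ∫⁻ _ in Ico (2 ^ n * y) (2 ^ (n + 1) * y), ENNReal.ofReal ((2 ^ n * y)⁻¹ ^ 2) ∂μ :=
          setLIntegral_mono measurable_const fun x hx =>
            ENNReal.ofReal_le_ofReal <|
            pow_le_pow_left₀ (inv_nonneg.2 (hlo.trans_le hx.1).le) (inv_anti₀ hlo hx.1) 2
      _ = ENNReal.ofReal ((2 ^ n * y)⁻¹ ^ 2) * μ (Ico (2 ^ n * y) (2 ^ (n + 1) * y)) :=
          setLIntegral_const _ _
      _ ≤ ENNReal.ofReal ((2 ^ n * y)⁻¹ ^ 2) * μ (Ioc 0 (2 ^ (n + 1) * y)) :=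
          by gcongr; exact fun x hx => ⟨hlo.trans_le hx.1, hx.2.le⟩
      _ ≤ ENNReal.ofReal ((2 ^ n * y)⁻¹ ^ 2) * ENNReal.ofReal (C * (2 ^ (n + 1) * y) ^ (2 - γ)) :=
          by gcongr; exact hμ _ (by positivity)
      _ = ENNReal.ofReal (c * q ^ n) := by
          rw [← ENNReal.ofReal_mul (by positivity), inv_sq_mul_rpow_two_pow_succ_mul n hy]
  calc ∫⁻ x in Ioi y, ENNReal.ofReal (x⁻¹ ^ 2) ∂μ
      ≤ ∑' n : ℕ, ∫⁻ x in Ico (2 ^ n * y) (2 ^ (n + 1) * y), ENNReal.ofReal (x⁻¹ ^ 2) ∂μ :=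
        (lintegral_mono_set (Ioi_subset_iUnion_Ico_two_pow_mul hy)).trans
          (lintegral_iUnion_le _ _)
    _ ≤ ∑' n : ℕ, ENNReal.ofReal c * ENNReal.ofReal q ^ n := by
        refine ENNReal.tsum_le_tsum fun n => (dyadic_piece n).trans_eq ?_
        rw [ENNReal.ofReal_mul' (by positivity), ENNReal.ofReal_pow hq0]
    _ = ENNReal.ofReal (C * 2 ^ (2 - γ) / (1 - q) * y ^ (-γ)) := by
        rw [ENNReal.tsum_mul_left, ENNReal.tsum_geometric, ← ENNReal.ofReal_one,
          ← ENNReal.ofReal_sub _ hq0, ← ENNReal.ofReal_inv_of_pos (by linarith),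
          ← ENNReal.ofReal_mul' (by simp; linarith)]
        congr 1
        ring

theorem integrableOn_Ioi_inv_sq (hγ : 0 < γ)
    (hμ : ∀ b, 0 < b → μ (Ioc 0 b) ≤ ENNReal.ofReal (C * b ^ (2 - γ))) (hy : 0 < y) :
    IntegrableOn (fun x => x⁻¹ ^ 2) (Ioi y) μ :=
  ⟨by fun_prop, (hasFiniteIntegral_iff_ofReal (ae_of_all _ fun x => by positivity)).2 <|
    (lintegral_Ioi_inv_sq_le hγ hμ hy).trans_lt ENNReal.ofReal_lt_top⟩

theorem lintegral_Ioc_mul_lintegral_Ioi_inv_sq_lt_top (hγ : γ ∈ Ioo 0 2)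
    (hμ : ∀ b, 0 < b → μ (Ioc 0 b) ≤ ENNReal.ofReal (C * b ^ (2 - γ))) (a : ℝ) :
    ∫⁻ y in Ioc 0 a, ENNReal.ofReal y * ∫⁻ x in Ioi y, ENNReal.ofReal (x⁻¹ ^ 2) ∂μ < ∞ := by
  set D := C * 2 ^ (2 - γ) / (1 - 2 ^ (-γ))
  have hpow : IntegrableOn (fun y : ℝ => D * y ^ (1 - γ)) (Ioc 0 a) :=
    ((intervalIntegral.intervalIntegrable_rpow' (by linarith [hγ.2])).1).const_mul D
  refine lt_of_le_of_lt (setLIntegral_mono' measurableSet_Ioc fun y hy => ?_)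
    hpow.lintegral_lt_top
  calc ENNReal.ofReal y * ∫⁻ x in Ioi y, ENNReal.ofReal (x⁻¹ ^ 2) ∂μ
      ≤ ENNReal.ofReal y * ENNReal.ofReal (D * y ^ (-γ)) :=
        by gcongr; exact lintegral_Ioi_inv_sq_le hγ.1 hμ hy.1
    _ = ENNReal.ofReal (D * y ^ (1 - γ)) := by
        rw [← ENNReal.ofReal_mul hy.1.le, sub_eq_add_neg, Real.rpow_add hy.1, Real.rpow_one]
        ring_nf

end TailBound

/-- The function `ψ` of the statement, for a general measure `μ` in place of `dh`. -/
noncomputable def invSqTail (μ : Measure ℝ) (y : ℝ) : ℝ := ∫ x in Ioi y, x⁻¹ ^ 2 ∂μ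

section SineTransform

variable {μ : Measure ℝ} {r a : ℝ}

-- The inequality is strict because `ψ` integrates over the open `(y, ∞)` and `μ` may have atoms.
noncomputable def sineTailKernel (r : ℝ) : ℝ × ℝ → ℝ :=
  {q : ℝ × ℝ | q.1 < q.2}.indicator fun q => Real.sin (r * q.1) * q.2⁻¹ ^ 2

lemma measurable_sineTailKernel : Measurable (sineTailKernel r) :=
  Measurable.indicator (by fun_prop) (measurableSet_lt measurable_fst measurable_snd)

lemma sineTailKernel_left (y : ℝ) :
    (fun x => sineTailKernel r (y, x)) = (Ioi y).indicator fun x => Real.sin (r * y) * x⁻¹ ^ 2 :=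
  rfl

lemma sineTailKernel_right (x : ℝ) :
    (fun y => sineTailKernel r (y, x)) = (Iio x).indicator fun y => Real.sin (r * y) * x⁻¹ ^ 2 :=
  rfl

lemma integral_sineTailKernel_left (y : ℝ) :
    ∫ x, sineTailKernel r (y, x) ∂μ = Real.sin (r * y) * invSqTail μ y := by
  rw [sineTailKernel_left, integral_indicator measurableSet_Ioi, integral_const_mul, invSqTail]

lemma intervalIntegral_sin_mul (r b : ℝ) :
    ∫ y in (0 : ℝ)..b, Real.sin (r * y) = 2 / r * Real.sin (r / 2 * b) ^ 2 := by
  rcases eq_or_ne r 0 with rfl | hr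
  · simp
  rw [intervalIntegral.integral_comp_mul_left Real.sin hr, integral_sin, Real.sin_sq_eq_half_sub,
    mul_zero, Real.cos_zero, smul_eq_mul]
  field_simp

lemma intervalIntegral_sineTailKernel_right (ha : 0 ≤ a) {x : ℝ} (hx : 0 ≤ x) :
    ∫ y in (0 : ℝ)..a, sineTailKernel r (y, x) =
      2 / r * (Real.sin (r / 2 * min a x) ^ 2 / x ^ 2) := by
  rw [intervalIntegral.integral_of_le ha, sineTailKernel_right,
    setIntegral_indicator measurableSet_Iio,
    setIntegral_congr_set ((ae_eq_refl _).inter Iio_ae_eq_Iic), Ioc_inter_Iic,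
    ← intervalIntegral.integral_of_le (le_min ha hx), intervalIntegral.integral_mul_const,
    intervalIntegral_sin_mul]
  ring

lemma intervalIntegral_sineTailKernel_right_of_nonpos (ha : 0 ≤ a) {x : ℝ} (hx : x ≤ 0) :
    ∫ y in (0 : ℝ)..a, sineTailKernel r (y, x) = 0 := by
  rw [intervalIntegral.integral_of_le ha]
  exact setIntegral_eq_zero_of_forall_eq_zero fun y hy =>
    indicator_of_notMem (s := {q : ℝ × ℝ | q.1 < q.2}) (not_lt.2 (hx.trans hy.1.le)) _

variable [SFinite μ]

theorem integrable_sineTailKernel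
    (hm : ∫⁻ y in Ioc 0 a, ENNReal.ofReal y * ∫⁻ x in Ioi y, ENNReal.ofReal (x⁻¹ ^ 2) ∂μ < ∞) :
    Integrable (sineTailKernel r) ((volume.restrict (Ioc 0 a)).prod μ) := by
  refine ⟨measurable_sineTailKernel.aestronglyMeasurable, ?_⟩
  rw [HasFiniteIntegral, lintegral_prod _ measurable_sineTailKernel.enorm.aemeasurable]
  have inner (y : ℝ) (hy : y ∈ Ioc 0 a) : ∫⁻ x, ‖sineTailKernel r (y, x)‖ₑ ∂μ ≤
      ENNReal.ofReal |r| * (ENNReal.ofReal y * ∫⁻ x in Ioi y, ENNReal.ofReal (x⁻¹ ^ 2) ∂μ) := by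
    calc ∫⁻ x, ‖sineTailKernel r (y, x)‖ₑ ∂μ
        = ∫⁻ x in Ioi y, ‖Real.sin (r * y) * x⁻¹ ^ 2‖ₑ ∂μ := by
          rw [← lintegral_indicator measurableSet_Ioi]
          simp_rw [← enorm_indicator_eq_indicator_enorm]
          rfl
      _ ≤ ∫⁻ x in Ioi y, ENNReal.ofReal (|r| * y) * ENNReal.ofReal (x⁻¹ ^ 2) ∂μ := by
          refine setLIntegral_mono' measurableSet_Ioi fun x _ => ?_
          rw [Real.enorm_eq_ofReal_abs, ← ENNReal.ofReal_mul (mul_nonneg (abs_nonneg r) hy.1.le),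
            abs_mul, abs_of_nonneg (by positivity : 0 ≤ x⁻¹ ^ 2)]
          gcongr
          calc |Real.sin (r * y)| ≤ |r * y| := Real.abs_sin_le_abs
            _ = |r| * y := by rw [abs_mul, abs_of_pos hy.1]
      _ = _ := by
          rw [lintegral_const_mul' _ _ ENNReal.ofReal_ne_top, ENNReal.ofReal_mul (abs_nonneg r),
            mul_assoc]
  calc ∫⁻ y in Ioc 0 a, ∫⁻ x, ‖sineTailKernel r (y, x)‖ₑ ∂μ
      ≤ ∫⁻ y in Ioc 0 a, ENNReal.ofReal |r| *
          (ENNReal.ofReal y * ∫⁻ x in Ioi y, ENNReal.ofReal (x⁻¹ ^ 2) ∂μ) :=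
        setLIntegral_mono' measurableSet_Ioc inner
    _ < ∞ := by
        rw [lintegral_const_mul' _ _ ENNReal.ofReal_ne_top]
        exact ENNReal.mul_lt_top ENNReal.ofReal_lt_top hm

theorem intervalIntegral_sin_mul_invSqTail (ha : 0 ≤ a)
    (hm : ∫⁻ y in Ioc 0 a, ENNReal.ofReal y * ∫⁻ x in Ioi y, ENNReal.ofReal (x⁻¹ ^ 2) ∂μ < ∞) :
    ∫ y in (0 : ℝ)..a, Real.sin (r * y) * invSqTail μ y =
      2 / r * ∫ x in Ioi 0, Real.sin (r / 2 * min a x) ^ 2 / x ^ 2 ∂μ := by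
  simp_rw [← integral_sineTailKernel_left]
  rw [intervalIntegral_integral_swap (by rw [uIoc_of_le ha]; exact integrable_sineTailKernel hm),
    ← integral_const_mul, ← setIntegral_eq_integral_of_forall_compl_eq_zero (s := Ioi 0)
      fun x hx => intervalIntegral_sineTailKernel_right_of_nonpos ha (not_lt.1 hx)]
  exact setIntegral_congr_fun measurableSet_Ioi fun x hx =>
    intervalIntegral_sineTailKernel_right ha (le_of_lt hx)

theorem integrableOn_sin_sq_min_div_sq (hr : r ≠ 0) (ha : 0 ≤ a)
    (hm : ∫⁻ y in Ioc 0 a, ENNReal.ofReal y * ∫⁻ x in Ioi y, ENNReal.ofReal (x⁻¹ ^ 2) ∂μ < ∞) :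
    IntegrableOn (fun x => Real.sin (r / 2 * min a x) ^ 2 / x ^ 2) (Ioi 0) μ := by
  have hK := (integrable_sineTailKernel (r := r) hm).integral_prod_right
  refine IntegrableOn.congr_fun (hK.integrableOn.const_mul (r / 2)) (fun x hx => ?_)
    measurableSet_Ioi
  rw [← intervalIntegral.integral_of_le ha, intervalIntegral_sineTailKernel_right ha (le_of_lt hx)]
  field_simp

end SineTransform

section Limit

variable {μ : Measure ℝ} {r a : ℝ}

lemma setIntegral_Ioi_sin_sq_min_div_sq (ha : 0 ≤ a)
    (hG : IntegrableOn (fun x => Real.sin (r / 2 * min a x) ^ 2 / x ^ 2) (Ioi 0) μ) :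
    ∫ x in Ioi 0, Real.sin (r / 2 * min a x) ^ 2 / x ^ 2 ∂μ =
      ∫ x in Ioc 0 a, Real.sin (r / 2 * x) ^ 2 / x ^ 2 ∂μ +
        Real.sin (r / 2 * a) ^ 2 * invSqTail μ a := by
  rw [← Ioc_union_Ioi_eq_Ioi ha] at hG ⊢
  rw [setIntegral_union (Ioc_disjoint_Ioi le_rfl) measurableSet_Ioi
    (hG.mono_set subset_union_left) (hG.mono_set subset_union_right), invSqTail,
    ← integral_const_mul]
  congr 1
  · exact setIntegral_congr_fun measurableSet_Ioc fun x hx => by rw [min_eq_right hx.2]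
  · exact setIntegral_congr_fun measurableSet_Ioi fun x hx => by
      rw [min_eq_left (le_of_lt hx), div_eq_mul_inv, inv_pow]

lemma integrableOn_sin_sq_div_sq (ha : 0 ≤ a)
    (hG : IntegrableOn (fun x => Real.sin (r / 2 * min a x) ^ 2 / x ^ 2) (Ioi 0) μ)
    (hψ : IntegrableOn (fun x => x⁻¹ ^ 2) (Ioi a) μ) :
    IntegrableOn (fun x => Real.sin (r / 2 * x) ^ 2 / x ^ 2) (Ioi 0) μ := by
  rw [← Ioc_union_Ioi_eq_Ioi ha]
  refine IntegrableOn.union ?_ ?_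
  · exact (hG.mono_set Ioc_subset_Ioi_self).congr_fun
      (fun x hx => by dsimp only; rw [min_eq_right hx.2]) measurableSet_Ioc
  · refine hψ.mono' (Measurable.aestronglyMeasurable (by fun_prop))
      (ae_restrict_of_forall_mem measurableSet_Ioi fun x _ => ?_)
    rw [Real.norm_of_nonneg (by positivity), inv_pow, ← one_div]
    gcongr
    exact Real.sin_sq_le_one _

lemma tendsto_invSqTail_atTop {y₀ : ℝ} (h : IntegrableOn (fun x => x⁻¹ ^ 2) (Ioi y₀) μ) :
    Tendsto (invSqTail μ) atTop (𝓝 0) := by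
  have := tendsto_setIntegral_of_antitone (μ := μ) (f := fun x => x⁻¹ ^ 2)
    (fun _ => measurableSet_Ioi) (fun _ _ h => Ioi_subset_Ioi h) ⟨y₀, h⟩
  have hempty : ⋂ y : ℝ, Ioi y = ∅ := iInter_eq_empty_iff.2 fun x => ⟨x, lt_irrefl x⟩
  rwa [hempty, Measure.restrict_empty, integral_zero_measure] at this

theorem tendsto_intervalIntegral_sin_mul_invSqTail [SFinite μ] (hr : 0 < r)
    (hm : ∀ a, ∫⁻ y in Ioc 0 a, ENNReal.ofReal y * ∫⁻ x in Ioi y, ENNReal.ofReal (x⁻¹ ^ 2) ∂μ < ∞)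
    (hψ : ∀ y, 0 < y → IntegrableOn (fun x => x⁻¹ ^ 2) (Ioi y) μ) :
    Tendsto (fun a => ∫ y in (0 : ℝ)..a, Real.sin (r * y) * invSqTail μ y) atTop
      (𝓝 (2 / r * ∫ x in Ioi 0, Real.sin (r / 2 * x) ^ 2 / x ^ 2 ∂μ)) := by
  have hG (a : ℝ) (ha : 0 ≤ a) := integrableOn_sin_sq_min_div_sq hr.ne' ha (hm a)
  have hS := integrableOn_sin_sq_div_sq zero_le_one (hG 1 zero_le_one) (hψ 1 one_pos)
  have hbulk : Tendsto (fun a => ∫ x in Ioc 0 a, Real.sin (r / 2 * x) ^ 2 / x ^ 2 ∂μ) atTop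
      (𝓝 (∫ x in Ioi 0, Real.sin (r / 2 * x) ^ 2 / x ^ 2 ∂μ)) := by
    simpa only [iUnion_Ioc_right] using tendsto_setIntegral_of_monotone
      (fun _ => measurableSet_Ioc) (fun _ _ h => Ioc_subset_Ioc_right h)
      (by rwa [iUnion_Ioc_right])
  have hboundary : Tendsto (fun a => Real.sin (r / 2 * a) ^ 2 * invSqTail μ a) atTop (𝓝 0) :=
    isBoundedUnder_le_mul_tendsto_zero
      ⟨1, eventually_map.2 (Eventually.of_forall fun a => by simpa using Real.sin_sq_le_one _)⟩
      (tendsto_invSqTail_atTop (hψ 1 one_pos))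
  refine Tendsto.congr' ?_ (by simpa using (hbulk.add hboundary).const_mul (2 / r))
  filter_upwards [eventually_ge_atTop 0] with a ha
  rw [intervalIntegral_sin_mul_invSqTail ha (hm a), setIntegral_Ioi_sin_sq_min_div_sq ha (hG a ha)]

end Limit

theorem psi_sine_transform_general (γ K₀ C : ℝ) (hγ : γ ∈ Ioo (0 : ℝ) 2)
    (h : StieltjesFunction ℝ) (hzero : ∀ y : ℝ, y ≤ 0 → h y = 0)
    (hbound : ∀ y : ℝ, 0 < y → h y ≤ C * y ^ (2 - γ))
    (hint : ∀ r : ℝ, 0 < r →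
      ∫ x in Ioi (0 : ℝ), Real.sin (r * x) ^ 2 / x ^ 2 ∂h.measure = K₀ * r ^ γ) :
    (∀ y : ℝ, 0 < y → IntegrableOn (fun x : ℝ => x⁻¹ ^ 2) (Ioi y) h.measure) ∧
    ∀ r : ℝ, 0 < r →
      Tendsto (fun a : ℝ =>
          ∫ y in (0 : ℝ)..a, Real.sin (r * y) * ∫ x in Ioi y, x⁻¹ ^ 2 ∂h.measure)
        atTop (𝓝 ((r / 2) ^ (γ - 1) * K₀)) := by
  have hμ (b : ℝ) (hb : 0 < b) : h.measure (Ioc 0 b) ≤ ENNReal.ofReal (C * b ^ (2 - γ)) := by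
    rw [h.measure_Ioc, hzero 0 le_rfl, sub_zero]
    exact ENNReal.ofReal_le_ofReal (hbound b hb)
  have hψ (y : ℝ) (hy : 0 < y) := integrableOn_Ioi_inv_sq hγ.1 hμ hy
  refine ⟨hψ, fun r hr => ?_⟩
  have hlim := tendsto_intervalIntegral_sin_mul_invSqTail hr
    (lintegral_Ioc_mul_lintegral_Ioi_inv_sq_lt_top hγ hμ) hψ
  have hvalue : (r / 2) ^ (γ - 1) * K₀ = 2 / r * (K₀ * (r / 2) ^ γ) := by
    rw [Real.rpow_sub (half_pos hr), Real.rpow_one]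
    field_simp
  rw [hvalue, ← hint (r / 2) (half_pos hr)]
  exact hlim

/-- Under the hypotheses of the identification lemma, the function
`ψ(y) = ∫_{(y,∞)} x⁻² dh(x)` is well defined (the integrand is integrable), and
its truncated sine transform satisfies
`∫_0^a sin(ry) ψ(y) dy → (r/2)^{γ-1} K₀` as `a → ∞`, for every `r > 0`. -/
theorem psi_sine_transform (γ K₀ C : ℝ) (hγ : γ ∈ Ioo (0 : ℝ) 2) (hK₀ : 0 < K₀)
    (h : StieltjesFunction ℝ) (hzero : ∀ y : ℝ, y ≤ 0 → h y = 0)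
    (hnn : ∀ y : ℝ, 0 ≤ h y)
    (hbound : ∀ y : ℝ, 0 < y → h y ≤ C * y ^ (2 - γ))
    (hint : ∀ r : ℝ, 0 < r →
      ∫ x in Ioi (0 : ℝ), Real.sin (r * x) ^ 2 / x ^ 2 ∂h.measure = K₀ * r ^ γ) :
    (∀ y : ℝ, 0 < y → IntegrableOn (fun x : ℝ => x⁻¹ ^ 2) (Ioi y) h.measure) ∧
    ∀ r : ℝ, 0 < r →
      Tendsto (fun a : ℝ =>
          ∫ y in (0 : ℝ)..a, Real.sin (r * y) * ∫ x in Ioi y, x⁻¹ ^ 2 ∂h.measure)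
        atTop (𝓝 ((r / 2) ^ (γ - 1) * K₀)) :=
  psi_sine_transform_general γ K₀ C hγ h hzero hbound hint
end
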